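/- Convergence of characteristics to the guiding center flow: assume E : ℝ × ℝ² → ℝ² is bounded by K₀, with ‖∂ₜE‖ ≤ K_t and ‖DₓE‖ ≤ K_x. Let ε > 0, let (x_ε, v_ε) solve ε x_ε' = v_ε, ε v_ε' = E(t,x_ε) − v_ε^⊥/ε with data (x⁰, v⁰) at t = 0, and let x solve x' = −E^⊥(t, x) with x(0) = x⁰. Then there is a constant C depending only on K₀, K_t, K_x such that for all t ≥ 0, ‖x_ε(t) − x(t)‖ ≤ C ε e^{K_x t}(1+t²)(‖v⁰‖ + ε). -/

import Mathlib

/-!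
The corrected velocity `w = v_ε + ε E^⊥(t, x_ε)` satisfies `w' = -ε⁻² w^⊥ + ε (d/dt E(t, x_ε))^⊥`.
Rotating `w` by the phase `t/ε²` removes the fast gyration without changing norms, so Grönwall
gives `‖v_ε(t)‖ ≤ M (1 + t) e^{K_x t}` with `M ~ ‖v⁰‖ + ε`. The guiding center `x_ε - ε v_ε^⊥`
moves with velocity `-E^⊥(t, x_ε)`, so its distance `z` to `x` obeys
`‖z'‖ ≤ K_x (‖z‖ + ε ‖v_ε‖)`; comparing with a barrier `p(t) e^{K_x t}`, `p` a quadratic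
polynomial, bounds `z` by `ε M (1 + t²) e^{K_x t}`, and `x_ε - x = z + ε v_ε^⊥`.
-/

/-- Rotation by π/2 on Euclidean `ℝ²`: `(a,b)^⊥ = (−b,a)`. -/
noncomputable def perp (v : EuclideanSpace ℝ (Fin 2)) : EuclideanSpace ℝ (Fin 2) :=
  WithLp.toLp 2 ![-(v 1), v 0]

open Real Set

local notation "ℝ²" => EuclideanSpace ℝ (Fin 2)

noncomputable def perpₗᵢ : ℝ² →ₗᵢ[ℝ] ℝ² where
  toFun := perp
  map_add' x y := by ext i; fin_cases i <;> simp [perp, add_comm]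
  map_smul' c x := by ext i; fin_cases i <;> simp [perp]
  norm_map' v := by simp [EuclideanSpace.norm_eq, Fin.sum_univ_two, perp, add_comm]

lemma perp_add (x y : ℝ²) : perp (x + y) = perp x + perp y := perpₗᵢ.map_add x y

lemma perp_sub (x y : ℝ²) : perp (x - y) = perp x - perp y := perpₗᵢ.map_sub x y

lemma perp_smul (c : ℝ) (x : ℝ²) : perp (c • x) = c • perp x := perpₗᵢ.map_smul c x

lemma norm_perp (v : ℝ²) : ‖perp v‖ = ‖v‖ := perpₗᵢ.norm_map v

lemma perp_perp (v : ℝ²) : perp (perp v) = -v := by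
  ext i; fin_cases i <;> simp [perp]

lemma HasDerivAt.perp {f : ℝ → ℝ²} {f' : ℝ²} {t : ℝ} (h : HasDerivAt f f' t) :
    HasDerivAt (fun s => perp (f s)) (perp f') t :=
  perpₗᵢ.toContinuousLinearMap.hasFDerivAt.comp_hasDerivAt t h

noncomputable def rot (θ : ℝ) (v : ℝ²) : ℝ² := cos θ • v + sin θ • perp v

lemma norm_rot (θ : ℝ) (v : ℝ²) : ‖rot θ v‖ = ‖v‖ := by
  simp only [rot, EuclideanSpace.norm_eq, Fin.sum_univ_two, perp]
  congr 1
  simp only [PiLp.add_apply, PiLp.smul_apply, smul_eq_mul, Matrix.cons_val_zero,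
    Matrix.cons_val_one, Matrix.cons_val_fin_one, mul_neg, norm_eq_abs, sq_abs]
  linear_combination (v 0 ^ 2 + v 1 ^ 2) * cos_sq_add_sin_sq θ

lemma hasDerivAt_rot_of_gyration {w : ℝ → ℝ²} {f : ℝ²} {ω s : ℝ}
    (hw : HasDerivAt w (-ω • perp (w s) + f) s) :
    HasDerivAt (fun r => rot (ω * r) (w r)) (rot (ω * s) f) s := by
  have hθ : HasDerivAt (fun r => ω * r) ω s := by simpa using (hasDerivAt_id s).const_mul ω
  refine ((hθ.cos.smul hw).add (hθ.sin.smul hw.perp)).congr_deriv ?_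
  simp only [rot, perp_add, perp_smul, perp_perp]
  module

theorem norm_le_mul_exp_of_norm_deriv_le {F : Type*} [NormedAddCommGroup F] [NormedSpace ℝ F]
    {f f' : ℝ → F} {p p' : ℝ → ℝ} {K a b : ℝ}
    (hf : ∀ x, HasDerivAt f (f' x) x) (hp : ∀ x, HasDerivAt p (p' x) x) (ha : ‖f a‖ ≤ p a)
    (bound : ∀ x ∈ Ico a b, ‖f' x‖ ≤ K * ‖f x‖ + p' x * exp (K * (x - a))) :
    ∀ x ∈ Icc a b, ‖f x‖ ≤ p x * exp (K * (x - a)) := by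
  intro x hx
  have hexp : ∀ c y, HasDerivAt (fun y => exp (c * (y - a))) (exp (c * (y - a)) * c) y := by
    intro c y
    simpa using (((hasDerivAt_id y).sub_const a).const_mul c).exp
  -- the barrier is perturbed by `η e^{(K+1)(x-a)}` to make the comparison strict
  have barrier : ∀ η > 0, ‖f x‖ ≤ p x * exp (K * (x - a)) + η * exp ((K + 1) * (x - a)) := by
    intro η hη
    refine image_norm_le_of_norm_deriv_right_lt_deriv_boundary
      (B := fun y => p y * exp (K * (y - a)) + η * exp ((K + 1) * (y - a)))
      (fun y _ => (hf y).continuousAt.continuousWithinAt) (fun y _ => (hf y).hasDerivWithinAt)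
      (by simpa using ha.trans (le_add_of_nonneg_right hη.le))
      (fun y => ((hp y).mul (hexp K y)).add ((hexp (K + 1) y).const_mul η))
      (fun y hy hfy => ?_) hx
    have := mul_pos hη (exp_pos ((K + 1) * (y - a)))
    calc ‖f' y‖ ≤ K * ‖f y‖ + p' y * exp (K * (y - a)) := bound y hy
      _ < _ := by rw [hfy]; linear_combination this
  refine le_of_forall_pos_lt_add fun δ hδ => ?_
  have := barrier (δ / 2 / exp ((K + 1) * (x - a))) (by positivity)
  rw [div_mul_cancel₀ _ (exp_pos _).ne'] at this
  linarith

theorem norm_le_mul_exp_of_gyration {w f : ℝ → ℝ²} {p p' : ℝ → ℝ} {ω K a b : ℝ}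
    (hw : ∀ s, HasDerivAt w (-ω • perp (w s) + f s) s) (hp : ∀ s, HasDerivAt p (p' s) s)
    (ha : ‖w a‖ ≤ p a) (bound : ∀ s ∈ Ico a b, ‖f s‖ ≤ K * ‖w s‖ + p' s * exp (K * (s - a))) :
    ∀ s ∈ Icc a b, ‖w s‖ ≤ p s * exp (K * (s - a)) := by
  simpa only [norm_rot] using norm_le_mul_exp_of_norm_deriv_le
    (fun s => hasDerivAt_rot_of_gyration (hw s)) hp (by rwa [norm_rot])
    (by simpa only [norm_rot] using bound)

section PartialDerivatives

variable {F G : Type*} [NormedAddCommGroup F] [NormedSpace ℝ F] [NormedAddCommGroup G]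
  [NormedSpace ℝ G] {E : ℝ → F → G}

theorem hasDerivAt_comp_of_differentiable_uncurry
    (hE : Differentiable ℝ fun p : ℝ × F => E p.1 p.2) {γ : ℝ → F} {γ' : F} {t : ℝ}
    (hγ : HasDerivAt γ γ' t) :
    HasDerivAt (fun s => E s (γ s))
      (fderiv ℝ (fun s => E s (γ t)) t 1 + fderiv ℝ (fun y => E t y) (γ t) γ') t := by
  set L := fderiv ℝ (fun p : ℝ × F => E p.1 p.2) (t, γ t)
  have hL : HasFDerivAt (fun p : ℝ × F => E p.1 p.2) L (t, γ t) := (hE (t, γ t)).hasFDerivAt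
  have ht : HasFDerivAt (fun s => E s (γ t)) (L.comp (.inl ℝ ℝ F)) t :=
    hL.comp (f := fun s => (s, γ t)) t (hasFDerivAt_prodMk_left t (γ t))
  have hx : HasFDerivAt (fun y => E t y) (L.comp (.inr ℝ ℝ F)) (γ t) :=
    hL.comp (f := fun y => (t, y)) (γ t) (hasFDerivAt_prodMk_right t (γ t))
  rw [ht.fderiv, hx.fderiv]
  refine (hL.comp_hasDerivAt (f := fun s => (s, γ s)) t
    ((hasDerivAt_id t).prodMk hγ)).congr_deriv ?_
  simp only [ContinuousLinearMap.comp_apply, ← map_add]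
  simp

theorem norm_sub_le_of_norm_fderiv_right_le (hE : Differentiable ℝ fun p : ℝ × F => E p.1 p.2)
    {Kx : ℝ} (hKx : ∀ t x, ‖fderiv ℝ (fun y => E t y) x‖ ≤ Kx) (t : ℝ) (x y : F) :
    ‖E t x - E t y‖ ≤ Kx * ‖x - y‖ :=
  convex_univ.norm_image_sub_le_of_norm_fderiv_le
    (fun z _ => (hE (t, z)).comp z ((differentiableAt_const t).prodMk differentiableAt_id))
    (fun z _ => hKx t z) (mem_univ y) (mem_univ x)

theorem norm_fderiv_partial_add_le {Kt Kx : ℝ}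
    (hKt : ∀ t x, ‖fderiv ℝ (fun s => E s x) t‖ ≤ Kt)
    (hKx : ∀ t x, ‖fderiv ℝ (fun y => E t y) x‖ ≤ Kx) (t : ℝ) (x v : F) :
    ‖fderiv ℝ (fun s => E s x) t 1 + fderiv ℝ (fun y => E t y) x v‖ ≤ Kt + Kx * ‖v‖ :=
  (norm_add_le _ _).trans (add_le_add
    (((fderiv ℝ _ t).le_of_opNorm_le (hKt t x) 1).trans_eq (by simp))
    ((fderiv ℝ _ x).le_of_opNorm_le (hKx t x) v))

end PartialDerivatives

section GuidingCenter

variable {E : ℝ → ℝ² → ℝ²} {ε : ℝ} {xe ve X : ℝ → ℝ²}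

theorem hasDerivAt_velocity_add_smul_perp (hε : ε ≠ 0) {s : ℝ} {g : ℝ²}
    (hve : HasDerivAt ve (ε⁻¹ • E s (xe s) - (ε ^ 2)⁻¹ • perp (ve s)) s)
    (hg : HasDerivAt (fun r => E r (xe r)) g s) :
    HasDerivAt (fun r => ve r + ε • perp (E r (xe r)))
      (-(ε ^ 2)⁻¹ • perp (ve s + ε • perp (E s (xe s))) + ε • perp g) s := by
  refine (hve.add (hg.perp.const_smul ε)).congr_deriv ?_
  rw [perp_add, perp_smul, perp_perp]
  match_scalars <;> field_simp

theorem hasDerivAt_guidingCenter_sub (hε : ε ≠ 0) {s : ℝ}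
    (hxe : HasDerivAt xe (ε⁻¹ • ve s) s)
    (hve : HasDerivAt ve (ε⁻¹ • E s (xe s) - (ε ^ 2)⁻¹ • perp (ve s)) s)
    (hX : HasDerivAt X (-perp (E s (X s))) s) :
    HasDerivAt (fun r => xe r - ε • perp (ve r) - X r)
      (perp (E s (X s)) - perp (E s (xe s))) s := by
  refine ((hxe.sub (hve.perp.const_smul ε)).sub hX).congr_deriv ?_
  rw [perp_sub, perp_smul, perp_smul, perp_perp]
  match_scalars <;> simp [field]

theorem norm_velocity_le (hε : 0 < ε) (hE : Differentiable ℝ fun p : ℝ × ℝ² => E p.1 p.2)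
    {K₀ Kt Kx : ℝ} (hK₀ : ∀ t x, ‖E t x‖ ≤ K₀) (hKt : ∀ t x, ‖fderiv ℝ (fun s => E s x) t‖ ≤ Kt)
    (hKx : ∀ t x, ‖fderiv ℝ (fun y => E t y) x‖ ≤ Kx)
    (hxe : ∀ t, HasDerivAt xe (ε⁻¹ • ve t) t)
    (hve : ∀ t, HasDerivAt ve (ε⁻¹ • E t (xe t) - (ε ^ 2)⁻¹ • perp (ve t)) t)
    {M : ℝ} (hM₀ : ‖ve 0‖ + 2 * ε * K₀ ≤ M) (hM : ε * (Kt + Kx * K₀) ≤ M)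
    {t : ℝ} (ht : 0 ≤ t) :
    ‖ve t‖ ≤ M * (1 + t) * exp (Kx * t) := by
  have hKx₀ : 0 ≤ Kx := (norm_nonneg _).trans (hKx 0 0)
  have hK₀0 : 0 ≤ K₀ := (norm_nonneg _).trans (hK₀ 0 0)
  have hM0 : 0 ≤ M := by nlinarith [norm_nonneg (ve 0)]
  have hεE : ∀ s, ‖ε • perp (E s (xe s))‖ ≤ ε * K₀ := fun s => by
    rw [norm_smul, norm_perp, norm_of_nonneg hε.le]
    exact mul_le_mul_of_nonneg_left (hK₀ s _) hε.le
  set w : ℝ → ℝ² := fun s => ve s + ε • perp (E s (xe s))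
  have hv_le : ∀ s, ‖ve s‖ ≤ ‖w s‖ + ε * K₀ := fun s => by
    have := norm_sub_le (w s) (ε • perp (E s (xe s)))
    simp only [w, add_sub_cancel_right] at this
    linarith [hεE s]
  have hforce : ∀ s, 0 ≤ s → ε * ‖fderiv ℝ (fun r => E r (xe s)) s 1 +
      fderiv ℝ (fun y => E s y) (xe s) (ε⁻¹ • ve s)‖ ≤ Kx * ‖w s‖ + M * exp (Kx * s) := by
    intro s hs
    have h := norm_fderiv_partial_add_le hKt hKx s (xe s) (ε⁻¹ • ve s)
    rw [norm_smul, norm_inv, norm_of_nonneg hε.le] at h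
    have h1 : 1 ≤ exp (Kx * s) := one_le_exp (by positivity)
    calc _ ≤ ε * (Kt + Kx * (ε⁻¹ * ‖ve s‖)) := mul_le_mul_of_nonneg_left h hε.le
      _ = ε * Kt + Kx * ‖ve s‖ := by field_simp
      _ ≤ Kx * ‖w s‖ + M * exp (Kx * s) := by
          nlinarith [mul_le_mul_of_nonneg_left (hv_le s) hKx₀, mul_le_mul_of_nonneg_left h1 hM0]
  have hw := norm_le_mul_exp_of_gyration (w := w) (p := fun s => M * (1 + s) - ε * K₀)
    (a := 0) (b := t) (K := Kx)
    (fun s => hasDerivAt_velocity_add_smul_perp hε.ne' (hve s)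
      (hasDerivAt_comp_of_differentiable_uncurry hE (hxe s)))
    (fun s => (((hasDerivAt_id s).const_add 1).const_mul M).sub_const _)
    (by
      have : ‖w 0‖ ≤ ‖ve 0‖ + ε * K₀ := (norm_add_le _ _).trans (add_le_add_right (hεE 0) _)
      linarith)
    (fun s hs => by
      rw [norm_smul, norm_perp, norm_of_nonneg hε.le, sub_zero, mul_one]
      exact hforce s hs.1)
    t ⟨ht, le_rfl⟩
  have h1 : 1 ≤ exp (Kx * t) := one_le_exp (by positivity)
  rw [sub_zero] at hw
  nlinarith [hv_le t, mul_le_mul_of_nonneg_left h1 (mul_nonneg hε.le hK₀0)]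

theorem norm_sub_le_of_norm_velocity_le (hε : 0 < ε) {Kx : ℝ} (hKx : 0 ≤ Kx)
    (hE : ∀ t x y, ‖E t x - E t y‖ ≤ Kx * ‖x - y‖)
    (hxe : ∀ t, HasDerivAt xe (ε⁻¹ • ve t) t)
    (hve : ∀ t, HasDerivAt ve (ε⁻¹ • E t (xe t) - (ε ^ 2)⁻¹ • perp (ve t)) t)
    (hX : ∀ t, HasDerivAt X (-perp (E t (X t))) t) (h₀ : xe 0 = X 0)
    {M : ℝ} (hv : ∀ s, 0 ≤ s → ‖ve s‖ ≤ M * (1 + s) * exp (Kx * s))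
    {t : ℝ} (ht : 0 ≤ t) :
    ‖xe t - X t‖ ≤ ε * M * (2 + (1 + Kx) * t + Kx * t ^ 2 / 2) * exp (Kx * t) := by
  set z : ℝ → ℝ² := fun s => xe s - ε • perp (ve s) - X s
  have hεv : ∀ s, ‖ε • perp (ve s)‖ = ε * ‖ve s‖ := fun s => by
    rw [norm_smul, norm_perp, norm_of_nonneg hε.le]
  have hsub_le : ∀ s, ‖xe s - X s‖ ≤ ‖z s‖ + ε * ‖ve s‖ := fun s => by
    rw [← hεv, show xe s - X s = z s + ε • perp (ve s) by simp only [z]; abel]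
    exact norm_add_le _ _
  have hz := norm_le_mul_exp_of_norm_deriv_le (f := z)
    (p := fun s => ε * M * (1 + Kx * s + Kx * s ^ 2 / 2)) (p' := fun s => ε * M * Kx * (1 + s))
    (a := 0) (b := t) (K := Kx)
    (fun s => hasDerivAt_guidingCenter_sub hε.ne' (hxe s) (hve s) (hX s))
    (fun s => by
      refine (((((hasDerivAt_id s).const_mul Kx).const_add 1).add
        (((hasDerivAt_pow 2 s).const_mul Kx).div_const 2)).const_mul (ε * M)).congr_deriv ?_
      ring)
    (by
      simp only [z, h₀, sub_sub_cancel_left, norm_neg, hεv]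
      simpa using mul_le_mul_of_nonneg_left (hv 0 le_rfl) hε.le)
    (fun s hs => by
      rw [← perp_sub, norm_perp, sub_zero]
      calc ‖E s (X s) - E s (xe s)‖ ≤ Kx * (‖z s‖ + ε * ‖ve s‖) := by
            rw [norm_sub_rev]
            exact (hE s _ _).trans (mul_le_mul_of_nonneg_left (hsub_le s) hKx)
        _ ≤ Kx * ‖z s‖ + ε * M * Kx * (1 + s) * exp (Kx * s) := by
            nlinarith [mul_le_mul_of_nonneg_left (hv s hs.1) (mul_nonneg hKx hε.le)])
    t ⟨ht, le_rfl⟩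
  rw [sub_zero] at hz
  nlinarith [hsub_le t, mul_le_mul_of_nonneg_left (hv t ht) hε.le]

end GuidingCenter

/-- convergence of the characteristics to the guiding-center flow:
there is a constant `C` depending only on `K₀, Kt, Kx` such that for any admissible
field `E`, `ε > 0`, and solutions with common data, `‖x_ε(t) − x(t)‖ ≤
C ε e^{Kₓt}(1+t²)(‖v⁰‖+ε)` for all `t ≥ 0`. -/
theorem stmt14 (K₀ Kt Kx : ℝ) :
    ∃ C : ℝ, 0 < C ∧
      ∀ (E : ℝ → EuclideanSpace ℝ (Fin 2) → EuclideanSpace ℝ (Fin 2)),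
        ContDiff ℝ 1 (fun p : ℝ × EuclideanSpace ℝ (Fin 2) => E p.1 p.2) →
        (∀ t x, ‖E t x‖ ≤ K₀) →
        (∀ t x, ‖fderiv ℝ (fun s => E s x) t‖ ≤ Kt) →
        (∀ t x, ‖fderiv ℝ (fun y => E t y) x‖ ≤ Kx) →
        ∀ (ε : ℝ), 0 < ε →
        ∀ (xe ve X : ℝ → EuclideanSpace ℝ (Fin 2)) (x0 v0 : EuclideanSpace ℝ (Fin 2)),
        (∀ t, HasDerivAt xe (ε⁻¹ • ve t) t) →
        (∀ t, HasDerivAt ve (ε⁻¹ • E t (xe t) - (ε ^ 2)⁻¹ • perp (ve t)) t) →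
        (∀ t, HasDerivAt X (-perp (E t (X t))) t) →
        xe 0 = x0 → ve 0 = v0 → X 0 = x0 →
        ∀ t, 0 ≤ t →
          ‖xe t - X t‖ ≤ C * ε * Real.exp (Kx * t) * (1 + t ^ 2) * (‖v0‖ + ε) := by
  refine ⟨3 * (1 + 2 * |K₀| + |Kt| + |Kx| * |K₀|) * (1 + |Kx|), by positivity, ?_⟩
  intro E hE hK₀ hKt hKx ε hε xe ve X x0 v0 hxe hve hX hxe0 hve0 hX0 t ht
  have hK₀0 : 0 ≤ K₀ := (norm_nonneg _).trans (hK₀ 0 0)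
  have hKt0 : 0 ≤ Kt := (norm_nonneg _).trans (hKt 0 0)
  have hKx0 : 0 ≤ Kx := (norm_nonneg _).trans (hKx 0 0)
  rw [abs_of_nonneg hK₀0, abs_of_nonneg hKt0, abs_of_nonneg hKx0]
  set A := 1 + 2 * K₀ + Kt + Kx * K₀ with hA
  have hv0 := norm_nonneg v0
  have hv := fun s (hs : 0 ≤ s) => norm_velocity_le (M := A * (‖v0‖ + ε)) hε
    (hE.differentiable one_ne_zero) hK₀ hKt hKx hxe hve
    (by rw [hve0, hA]; nlinarith [mul_nonneg hK₀0 hv0, mul_nonneg hKt0 hv0, mul_nonneg hKt0 hε.le,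
      mul_nonneg (mul_nonneg hKx0 hK₀0) hv0, mul_nonneg (mul_nonneg hKx0 hK₀0) hε.le])
    (by rw [hA]; nlinarith [mul_nonneg hK₀0 hv0, mul_nonneg hKt0 hv0, mul_nonneg hK₀0 hε.le,
      mul_nonneg (mul_nonneg hKx0 hK₀0) hv0])
    hs
  have hdev := norm_sub_le_of_norm_velocity_le hε hKx0
    (norm_sub_le_of_norm_fderiv_right_le (hE.differentiable one_ne_zero) hKx) hxe hve hX
    (hxe0.trans hX0.symm) hv ht
  have hA0 : 0 ≤ A := by positivity
  have hpoly : 2 + (1 + Kx) * t + Kx * t ^ 2 / 2 ≤ 3 * (1 + Kx) * (1 + t ^ 2) := by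
    nlinarith [sq_nonneg (t - 1), mul_nonneg hKx0 (sq_nonneg (t - 1))]
  calc _ ≤ _ := hdev
    _ ≤ ε * (A * (‖v0‖ + ε)) * (3 * (1 + Kx) * (1 + t ^ 2)) * exp (Kx * t) := by gcongr
    _ = _ := by ring
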